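/- For every n ≥ 1, t > 0 and b > 0 there exists a constant c_1 > 0 depending only on n, t and b with the following property. Let E ⊆ ℝ^n be the image of the closed unit ball under an invertible linear map (an ellipsoid centered at the origin), let Ω be an open bounded convex set with tE ⊆ Ω ⊆ E, and let v be a convex function on the closure of Ω with v = 0 on ∂Ω and μ_v(Ω) < ∞. If μ_v(tΩ) ≥ b·μ_v(Ω), then |v(0)| ≥ c_1 · H^n(Ω)^{1/n} · μ_v(Ω)^{1/n}. -/

import Mathlib

open MeasureTheory Set
open scoped ENNReal NNReal RealInnerProductSpace

noncomputable section

/-- Support function of a set `K`. -/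
def suppFn {n : ℕ} (K : Set (EuclideanSpace ℝ (Fin n))) (u : EuclideanSpace ℝ (Fin n)) : ℝ :=
  sSup ((fun y => ⟪u, y⟫) '' K)

/-- Face of `K` with outer normal `u`. -/
def face {n : ℕ} (K : Set (EuclideanSpace ℝ (Fin n))) (u : EuclideanSpace ℝ (Fin n)) :
    Set (EuclideanSpace ℝ (Fin n)) :=
  {z ∈ K | ⟪z, u⟫ = suppFn K u}

/-- Normal cone of `K` at `z`. -/
def normalCone {n : ℕ} (K : Set (EuclideanSpace ℝ (Fin n))) (z : EuclideanSpace ℝ (Fin n)) :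
    Set (EuclideanSpace ℝ (Fin n)) :=
  {u | ∀ y ∈ K, ⟪u, y⟫ ≤ ⟪u, z⟫}

/-- The unit sphere `S^{n-1}` in `ℝ^n`. -/
def unitSphere (n : ℕ) : Set (EuclideanSpace ℝ (Fin n)) :=
  Metric.sphere (0 : EuclideanSpace ℝ (Fin n)) 1

/-- Surface area measure of `K` evaluated on `ω`:
`S_K(ω) = H^{n-1}(⋃_{u ∈ ω} F(K,u))`. -/
def surfMeas {n : ℕ} (K : Set (EuclideanSpace ℝ (Fin n)))
    (ω : Set (EuclideanSpace ℝ (Fin n))) : ℝ≥0∞ :=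
  μH[(n : ℝ) - 1] (⋃ u ∈ ω, face K u)

/-- `K ∈ 𝒦₀ⁿ`: compact convex with nonempty interior, containing the origin. -/
def IsConvexBody0 {n : ℕ} (K : Set (EuclideanSpace ℝ (Fin n))) : Prop :=
  IsCompact K ∧ Convex ℝ K ∧ (interior K).Nonempty ∧ (0 : EuclideanSpace ℝ (Fin n)) ∈ K

/-- `K` is a solution of the `L_p` Minkowski problem `dS_{K,p} = f dH^{n-1}`. -/
def IsLpSolution {n : ℕ} (p : ℝ) (f : EuclideanSpace ℝ (Fin n) → ℝ)
    (K : Set (EuclideanSpace ℝ (Fin n))) : Prop :=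
  μH[(n : ℝ) - 1] {u ∈ unitSphere n | suppFn K u = 0} = 0 ∧
  ∀ ω : Set (EuclideanSpace ℝ (Fin n)), MeasurableSet ω →
    ω ⊆ {u ∈ unitSphere n | 0 < suppFn K u} →
    surfMeas K ω
      = ∫⁻ u in ω, ENNReal.ofReal ((n : ℝ) * f u * suppFn K u ^ (p - 1)) ∂μH[(n : ℝ) - 1]

/-- `x` is a smooth boundary point: the normal cone spans a one-dimensional space. -/
def IsSmoothPt {n : ℕ} (K : Set (EuclideanSpace ℝ (Fin n)))
    (x : EuclideanSpace ℝ (Fin n)) : Prop :=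
  Module.finrank ℝ (Submodule.span ℝ (normalCone K x)) = 1

/-- `K` is smooth: every boundary point is a smooth point. -/
def IsSmoothBody {n : ℕ} (K : Set (EuclideanSpace ℝ (Fin n))) : Prop :=
  ∀ x ∈ frontier K, IsSmoothPt K x

/-- Subgradient of `v` at `x` relative to the domain `Ω`. -/
def subgrad {n : ℕ} (Ω : Set (EuclideanSpace ℝ (Fin n))) (v : EuclideanSpace ℝ (Fin n) → ℝ)
    (x : EuclideanSpace ℝ (Fin n)) : Set (EuclideanSpace ℝ (Fin n)) :=
  {z | ∀ y ∈ Ω, v x + ⟪z, y - x⟫ ≤ v y}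

/-- Monge–Ampère measure of `v` (relative to domain `Ω`) evaluated on `ω`. -/
def maMeasure {n : ℕ} (Ω : Set (EuclideanSpace ℝ (Fin n))) (v : EuclideanSpace ℝ (Fin n) → ℝ)
    (ω : Set (EuclideanSpace ℝ (Fin n))) : ℝ≥0∞ :=
  μH[(n : ℝ)] (⋃ x ∈ ω, subgrad Ω v x)

/-- Hessian matrix of `v : ℝ^n → ℝ` at `x`. -/
def hessMatrix {n : ℕ} (v : EuclideanSpace ℝ (Fin n) → ℝ) (x : EuclideanSpace ℝ (Fin n)) :
    Matrix (Fin n) (Fin n) ℝ :=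
  Matrix.of fun i j =>
    fderiv ℝ (fun y => fderiv ℝ v y (EuclideanSpace.single j 1)) x (EuclideanSpace.single i 1)

open scoped Pointwise

/-!
Since `v` is convex and vanishes on `∂Ω`, it is nonpositive in `Ω` (restrict it to a line through
the point). As `tE ⊆ Ω` is symmetric, convexity gives `v ≥ 2 v(0)` on `tE`, and for `x ∈ tΩ`,
`e ∈ E` the point `x + t(1-t) e` lies in `Ω`; so every `z ∈ ∂v(x)` satisfies
`t(1-t) ⟪z, e⟫ ≤ 2|v(0)|`. Hence the subgradients over `tΩ` lie in the polar ellipsoid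
`(Tᵀ)⁻¹ B_R` with `R = 2|v(0)|/(t(1-t))`, whose volume times `|E|` is `R^n |B|²` whatever `T` is.
With `|Ω| ≤ |E|` this gives `b μ_v(Ω) |Ω| ≤ μ_v(tΩ) |Ω| ≤ R^n |B|²`. For `t ≥ 1` the hypotheses
force `Ω = E`, a nonempty bounded clopen set, which cannot exist.
-/

open Metric Bornology

theorem IsPreconnected.inter_frontier_nonempty {X : Type*} [TopologicalSpace X] {s t : Set X}
    (hs : IsPreconnected s) (hst : (s ∩ t).Nonempty) (hsc : (s \ t).Nonempty) :
    (s ∩ frontier t).Nonempty := by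
  by_contra! h
  have hcover : s ⊆ interior t ∪ (closure t)ᶜ := fun x hx => by
    by_cases hxc : x ∈ closure t
    · left
      by_contra hxi
      exact h.subset ⟨hx, hxc, hxi⟩
    · exact Or.inr hxc
  obtain ⟨x, hxs, hxt⟩ := hst
  obtain ⟨y, hys, hyt⟩ := hsc
  obtain ⟨z, -, hzi, hzc⟩ := hs _ _ isOpen_interior isClosed_closure.isOpen_compl hcover
    ⟨x, hxs, (hcover hxs).resolve_right fun hxc => hxc (subset_closure hxt)⟩
    ⟨y, hys, (hcover hys).resolve_left fun hyi => hyt (interior_subset hyi)⟩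
  exact hzc (interior_subset_closure hzi)

theorem Bornology.IsBounded.exists_add_smul_mem_frontier {E : Type*} [NormedAddCommGroup E]
    [NormedSpace ℝ E] {Ω : Set E} (hΩ : IsBounded Ω) {x u : E} (hx : x ∈ Ω) (hu : ‖u‖ = 1) :
    ∃ a : ℝ, 0 ≤ a ∧ x + a • u ∈ frontier Ω := by
  obtain ⟨C, hC⟩ := isBounded_iff_forall_norm_le.1 hΩ
  have hray : IsPreconnected ((fun a : ℝ => x + a • u) '' Ici 0) :=
    isPreconnected_Ici.image _ (by fun_prop : Continuous fun a : ℝ => x + a • u).continuousOn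
  have hC0 : 0 ≤ C := (norm_nonneg x).trans (hC x hx)
  set a₀ := C + ‖x‖ + 1
  have ha₀ : 0 ≤ a₀ := by positivity
  have hfar : x + a₀ • u ∉ Ω := fun hmem => by
    have h := norm_sub_le (x + a₀ • u) x
    rw [add_sub_cancel_left, norm_smul, hu, mul_one, Real.norm_of_nonneg ha₀] at h
    linarith [hC _ hmem]
  obtain ⟨_, ⟨a, ha, rfl⟩, hfr⟩ := hray.inter_frontier_nonempty
    ⟨x, ⟨0, self_mem_Ici, by simp⟩, hx⟩ ⟨_, ⟨a₀, ha₀, rfl⟩, hfar⟩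
  exact ⟨a, ha, hfr⟩

theorem mem_segment_sub_smul_add_smul {E : Type*} [NormedAddCommGroup E] [NormedSpace ℝ E]
    (x u : E) {a b : ℝ} (ha : 0 ≤ a) (hb : 0 ≤ b) : x ∈ segment ℝ (x - b • u) (x + a • u) := by
  have h := image_segment ℝ (AffineMap.lineMap (k := ℝ) x (x + u)) (-b) a
  simp only [AffineMap.lineMap_apply_module', add_sub_cancel_left, neg_smul] at h
  rw [sub_eq_add_neg, add_comm x, add_comm x, ← h]
  exact ⟨0, by rw [segment_eq_Icc (by linarith)]; exact ⟨by linarith, ha⟩, by simp⟩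

theorem image_closedBall_subset_smul {E F : Type*} [NormedAddCommGroup E] [NormedSpace ℝ E]
    [AddCommGroup F] [Module ℝ F] (T : E →ₗ[ℝ] F) {t : ℝ} (ht : 1 ≤ t) :
    T '' closedBall 0 1 ⊆ t • T '' closedBall 0 1 := by
  rw [← image_smul_set, _root_.smul_closedBall _ _ zero_le_one, smul_zero,
    Real.norm_of_nonneg (by linarith), mul_one]
  exact image_mono (closedBall_subset_closedBall ht)

theorem zero_mem_of_smul_image_closedBall_subset {E F : Type*} [NormedAddCommGroup E]
    [NormedSpace ℝ E] [AddCommGroup F] [Module ℝ F] {f : E → F} (hf : f 0 = 0) {Ω : Set F}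
    {t : ℝ} (htΩ : t • f '' closedBall 0 1 ⊆ Ω) : (0 : F) ∈ Ω :=
  htΩ ⟨0, ⟨0, mem_closedBall_self zero_le_one, hf⟩, smul_zero t⟩

theorem lt_one_of_smul_image_closedBall_subset {E : Type*} [NormedAddCommGroup E]
    [NormedSpace ℝ E] [FiniteDimensional ℝ E] [Nontrivial E] (T : E →ₗ[ℝ] E) {Ω : Set E}
    (hΩo : IsOpen Ω) (hΩb : IsBounded Ω) {t : ℝ} (htΩ : t • T '' closedBall 0 1 ⊆ Ω)
    (hΩT : Ω ⊆ T '' closedBall 0 1) : t < 1 := by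
  by_contra! ht
  have hΩ : Ω = T '' closedBall 0 1 :=
    hΩT.antisymm ((image_closedBall_subset_smul T ht).trans htΩ)
  have hclosed : IsClosed Ω :=
    hΩ ▸ ((isCompact_closedBall 0 1).image T.continuous_of_finiteDimensional).isClosed
  have huniv := IsClopen.eq_univ ⟨hclosed, hΩo⟩
    ⟨0, zero_mem_of_smul_image_closedBall_subset (map_zero T) htΩ⟩
  exact NormedSpace.unbounded_univ ℝ E (huniv ▸ hΩb)

theorem LinearMap.det_adjoint {𝕜 E : Type*} [RCLike 𝕜] [NormedAddCommGroup E]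
    [InnerProductSpace 𝕜 E] [FiniteDimensional 𝕜 E] (f : E →ₗ[𝕜] E) :
    LinearMap.det (LinearMap.adjoint f) = star (LinearMap.det f) := by
  let b := (stdOrthonormalBasis 𝕜 E).toBasis
  rw [← LinearMap.det_toMatrix b, ← LinearMap.det_toMatrix b, LinearMap.toMatrix_adjoint,
    Matrix.det_conjTranspose]

theorem norm_le_of_forall_inner_le {E : Type*} [NormedAddCommGroup E] [InnerProductSpace ℝ E]
    {w : E} {R : ℝ} (h : ∀ y, ‖y‖ ≤ 1 → ⟪w, y⟫ ≤ R) : ‖w‖ ≤ R := by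
  have hy : ‖‖w‖⁻¹ • w‖ ≤ 1 := by
    rw [norm_smul, norm_inv, norm_norm]
    exact inv_mul_le_one_of_le₀ le_rfl (norm_nonneg w)
  have := h _ hy
  rwa [real_inner_smul_right, real_inner_self_eq_norm_sq, pow_two, ← mul_assoc,
    inv_mul_mul_self] at this

theorem ConvexOn.nonpos_of_eq_zero_on_frontier {E : Type*} [NormedAddCommGroup E]
    [NormedSpace ℝ E] [Nontrivial E] {Ω : Set E} {v : E → ℝ} (hΩ : IsBounded Ω)
    (hv : ConvexOn ℝ (closure Ω) v) (hv0 : ∀ x ∈ frontier Ω, v x = 0) {x : E} (hx : x ∈ Ω) :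
    v x ≤ 0 := by
  obtain ⟨u, hu⟩ := exists_norm_eq E zero_le_one
  obtain ⟨a, ha, hfa⟩ := hΩ.exists_add_smul_mem_frontier hx hu
  obtain ⟨b, hb, hfb⟩ := hΩ.exists_add_smul_mem_frontier hx (u := -u) (by rwa [norm_neg])
  rw [smul_neg, ← sub_eq_add_neg] at hfb
  calc v x ≤ max (v (x - b • u)) (v (x + a • u)) :=
        hv.le_on_segment (frontier_subset_closure hfb) (frontier_subset_closure hfa)
          (mem_segment_sub_smul_add_smul x u ha hb)
    _ = 0 := by rw [hv0 _ hfb, hv0 _ hfa, max_self]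

theorem addHaar_preimage_adjoint_mul_addHaar_image {E : Type*} [NormedAddCommGroup E]
    [InnerProductSpace ℝ E] [FiniteDimensional ℝ E] [MeasurableSpace E] [BorelSpace E]
    (μ : Measure E) [μ.IsAddHaarMeasure] (T : E ≃ₗ[ℝ] E) {R : ℝ} (hR : 0 ≤ R) :
    μ (LinearMap.adjoint (T : E →ₗ[ℝ] E) ⁻¹' closedBall 0 R) * μ (T '' closedBall 0 1) =
      ENNReal.ofReal (R ^ Module.finrank ℝ E) * μ (closedBall 0 1) ^ 2 := by
  set d := LinearMap.det (T : E →ₗ[ℝ] E)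
  have hd : d ≠ 0 := (LinearEquiv.isUnit_det' T).ne_zero
  have hd' : LinearMap.det (LinearMap.adjoint (T : E →ₗ[ℝ] E)) = d := by
    rw [LinearMap.det_adjoint, star_trivial]
  have hcancel : ENNReal.ofReal |d⁻¹| * ENNReal.ofReal |d| = 1 := by
    rw [← ENNReal.ofReal_mul (abs_nonneg _), ← abs_mul, inv_mul_cancel₀ hd, abs_one,
      ENNReal.ofReal_one]
  rw [Measure.addHaar_preimage_linearMap μ (hd' ▸ hd), hd', Measure.addHaar_closedBall' μ _ hR,
    show T '' closedBall 0 1 = (T : E →ₗ[ℝ] E) '' closedBall 0 1 from rfl,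
    Measure.addHaar_image_linearMap]
  calc _ = (ENNReal.ofReal |d⁻¹| * ENNReal.ofReal |d|) *
        (ENNReal.ofReal (R ^ Module.finrank ℝ E) * μ (closedBall 0 1) ^ 2) := by ring
    _ = _ := by rw [hcancel, one_mul]

section MongeAmpere

variable {n : ℕ} {Ω : Set (EuclideanSpace ℝ (Fin n))} {v : EuclideanSpace ℝ (Fin n) → ℝ}

theorem inner_sub_le_of_mem_subgrad (hv : ConvexOn ℝ Ω v) (hv_nonpos : ∀ y ∈ Ω, v y ≤ 0)
    {x y z : EuclideanSpace ℝ (Fin n)} (hx : x ∈ Ω) (hnx : -x ∈ Ω) (hy : y ∈ Ω)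
    (hz : z ∈ subgrad Ω v x) : ⟪z, y - x⟫ ≤ -2 * v 0 := by
  have hmid := hv.2 hx hnx (by norm_num : (0 : ℝ) ≤ 1 / 2) (by norm_num : (0 : ℝ) ≤ 1 / 2)
    (by norm_num)
  rw [← smul_add, add_neg_cancel, smul_zero, smul_eq_mul, smul_eq_mul] at hmid
  linarith [hz y hy, hv_nonpos y hy, hv_nonpos _ hnx]

theorem biUnion_subgrad_smul_subset_preimage_adjoint
    (T : EuclideanSpace ℝ (Fin n) ≃ₗ[ℝ] EuclideanSpace ℝ (Fin n)) {t : ℝ} (ht0 : 0 < t)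
    (ht1 : t < 1) (htΩ : t • T '' closedBall 0 1 ⊆ Ω) (hΩT : Ω ⊆ T '' closedBall 0 1)
    (hv : ConvexOn ℝ Ω v) (hv_nonpos : ∀ y ∈ Ω, v y ≤ 0) :
    ⋃ x ∈ t • Ω, subgrad Ω v x ⊆
      LinearMap.adjoint (T : EuclideanSpace ℝ (Fin n) →ₗ[ℝ] EuclideanSpace ℝ (Fin n)) ⁻¹'
        closedBall 0 (-2 * v 0 / (t * (1 - t))) := by
  intro z hz
  obtain ⟨_, ⟨w, hw, rfl⟩, hz⟩ := mem_iUnion₂.1 hz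
  have hsmul_mem : ∀ y ∈ closedBall (0 : EuclideanSpace ℝ (Fin n)) 1, t • T y ∈ Ω :=
    fun y hy => htΩ ⟨T y, ⟨y, hy, rfl⟩, rfl⟩
  obtain ⟨y₀, hy₀, rfl⟩ := hΩT hw
  rw [mem_preimage, mem_closedBall_zero_iff]
  refine norm_le_of_forall_inner_le fun y hy => ?_
  have hneg : -(t • T y₀) ∈ Ω := by
    simpa using hsmul_mem (-y₀) (by simpa using hy₀)
  have hcomb : t • T y₀ + (1 - t) • (t • T y) ∈ Ω :=
    hv.1 hw (hsmul_mem y (mem_closedBall_zero_iff.2 hy)) ht0.le (by linarith) (by ring)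
  have key := inner_sub_le_of_mem_subgrad hv hv_nonpos (hsmul_mem y₀ hy₀) hneg hcomb hz
  rw [add_sub_cancel_left, real_inner_smul_right, real_inner_smul_right] at key
  rw [LinearMap.adjoint_inner_left, le_div_iff₀ (by nlinarith)]
  linear_combination key

theorem maMeasure_smul_mul_le
    (T : EuclideanSpace ℝ (Fin n) ≃ₗ[ℝ] EuclideanSpace ℝ (Fin n)) {t : ℝ} (ht0 : 0 < t)
    (ht1 : t < 1) (htΩ : t • T '' closedBall 0 1 ⊆ Ω) (hΩT : Ω ⊆ T '' closedBall 0 1)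
    (hv : ConvexOn ℝ Ω v) (hv_nonpos : ∀ y ∈ Ω, v y ≤ 0) :
    maMeasure Ω v (t • Ω) * μH[(n : ℝ)] Ω ≤ ENNReal.ofReal ((-2 * v 0 / (t * (1 - t))) ^ n) *
      μH[(n : ℝ)] (closedBall (0 : EuclideanSpace ℝ (Fin n)) 1) ^ 2 := by
  have hv0 := hv_nonpos 0 (zero_mem_of_smul_image_closedBall_subset (map_zero T) htΩ)
  have hR : 0 ≤ -2 * v 0 / (t * (1 - t)) := div_nonneg (by linarith) (by nlinarith)
  calc _ ≤ μH[(n : ℝ)] (LinearMap.adjoint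
          (T : EuclideanSpace ℝ (Fin n) →ₗ[ℝ] EuclideanSpace ℝ (Fin n)) ⁻¹'
          closedBall 0 (-2 * v 0 / (t * (1 - t)))) * μH[(n : ℝ)] (T '' closedBall 0 1) :=
        mul_le_mul' (measure_mono <| biUnion_subgrad_smul_subset_preimage_adjoint T ht0 ht1 htΩ
          hΩT hv hv_nonpos) (measure_mono hΩT)
    _ = _ := by
      rw [addHaar_preimage_adjoint_mul_addHaar_image _ T hR, finrank_euclideanSpace_fin]

end MongeAmpere

/-- **Lemma 3.3 (ii) (Trudinger–Wang).** If `v` is convex on the closure of `Ω`,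
vanishes on `∂Ω`, `tE ⊆ Ω ⊆ E` for an origin-centered ellipsoid `E`, and
`μ_v(tΩ) ≥ b μ_v(Ω)`, then `|v(0)| ≥ c₁ H^n(Ω)^{1/n} μ_v(Ω)^{1/n}`. -/
theorem stmt11 (n : ℕ) (hn : 1 ≤ n) (t : ℝ) (ht : 0 < t) (b : ℝ) (hb : 0 < b) :
    ∃ c1 : ℝ, 0 < c1 ∧
      ∀ (T : EuclideanSpace ℝ (Fin n) ≃ₗ[ℝ] EuclideanSpace ℝ (Fin n))
        (E Ω : Set (EuclideanSpace ℝ (Fin n))),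
        E = T '' Metric.closedBall 0 1 →
        IsOpen Ω → Bornology.IsBounded Ω → Convex ℝ Ω →
        t • E ⊆ Ω → Ω ⊆ E →
        ∀ v : EuclideanSpace ℝ (Fin n) → ℝ, ConvexOn ℝ (closure Ω) v →
          (∀ x ∈ frontier Ω, v x = 0) →
          maMeasure Ω v Ω < ⊤ →
          ENNReal.ofReal b * maMeasure Ω v Ω ≤ maMeasure Ω v (t • Ω) →
          c1 * (μH[(n : ℝ)] Ω).toReal ^ ((1 : ℝ) / n) *
              (maMeasure Ω v Ω).toReal ^ ((1 : ℝ) / n) ≤ |v 0| := by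
  have : Nonempty (Fin n) := ⟨⟨0, hn⟩⟩
  rcases lt_or_ge t 1 with ht1 | ht1
  swap
  · exact ⟨1, one_pos, fun T _ Ω hE hΩo hΩb _ htE hΩE _ _ _ _ _ =>
      absurd (lt_one_of_smul_image_closedBall_subset (T : _ →ₗ[ℝ] _) hΩo hΩb (hE ▸ htE)
        (hE ▸ hΩE)) ht1.not_gt⟩
  have hβ_top : μH[(n : ℝ)] (closedBall (0 : EuclideanSpace ℝ (Fin n)) 1) ≠ ⊤ :=
    (isCompact_closedBall _ _).measure_lt_top.ne
  set β := (μH[(n : ℝ)] (closedBall (0 : EuclideanSpace ℝ (Fin n)) 1)).toReal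
  have hβ : 0 < β := ENNReal.toReal_pos (measure_closedBall_pos _ _ one_pos).ne' hβ_top
  refine ⟨t * (1 - t) / 2 * (b / β ^ 2) ^ ((1 : ℝ) / n), by have := sub_pos.2 ht1; positivity, ?_⟩
  rintro T _ Ω rfl hΩo hΩb hΩc htE hΩE v hv hvb - hμb
  have hv_nonpos : ∀ x ∈ Ω, v x ≤ 0 := fun x hx => hv.nonpos_of_eq_zero_on_frontier hΩb hvb hx
  have hv0 := hv_nonpos 0 (zero_mem_of_smul_image_closedBall_subset (map_zero T) htE)
  have hreal := ENNReal.toReal_mono (by finiteness) <| (mul_le_mul_left hμb (μH[(n : ℝ)] Ω)).trans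
    (maMeasure_smul_mul_le T ht ht1 htE hΩE (hv.subset subset_closure hΩc) hv_nonpos)
  set R := -2 * v 0 / (t * (1 - t)) with hR_def
  have hR : 0 ≤ R := div_nonneg (by linarith) (by nlinarith)
  simp only [ENNReal.toReal_mul, ENNReal.toReal_pow, ENNReal.toReal_ofReal hb.le,
    ENNReal.toReal_ofReal (pow_nonneg hR n)] at hreal
  set m := (maMeasure Ω v Ω).toReal
  set w := (μH[(n : ℝ)] Ω).toReal
  calc t * (1 - t) / 2 * (b / β ^ 2) ^ ((1 : ℝ) / n) * w ^ ((1 : ℝ) / n) * m ^ ((1 : ℝ) / n)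
      = t * (1 - t) / 2 * (b / β ^ 2 * w * m) ^ ((1 : ℝ) / n) := by
        rw [Real.mul_rpow (by positivity) (by positivity),
          Real.mul_rpow (by positivity) (by positivity)]
        ring
    _ ≤ t * (1 - t) / 2 * R := by
        gcongr
        rw [one_div, Real.rpow_inv_le_iff_of_pos (by positivity) hR (by positivity),
          Real.rpow_natCast, div_mul_eq_mul_div, div_mul_eq_mul_div, div_le_iff₀ (by positivity)]
        linarith
    _ = |v 0| := by
        rw [hR_def, abs_of_nonpos hv0]
        field_simp
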